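/- Let H be a finite group acting transitively on a finite set Ω with |Ω| = d ≥ 2. Then the number of elements of H that fix at least one point of Ω is at most (1 - 1/d)·|H|. -/
import Mathlib

open MulAction Finset

theorem stmt_5 {H Ω : Type*} [Group H] [Finite H] [Finite Ω] [MulAction H Ω]
    [MulAction.IsPretransitive H Ω] (hd : 2 ≤ Nat.card Ω) :
    (Nat.card {σ : H | ∃ ω : Ω, σ • ω = ω} : ℝ)
      ≤ (1 - 1 / (Nat.card Ω : ℝ)) * (Nat.card H : ℝ) := by
  classical
  cases nonempty_fintype H
  cases nonempty_fintype Ω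
  set d := Nat.card Ω with hdef
  have hdcard : d = Fintype.card Ω := Nat.card_eq_fintype_card
  have hd0 : 0 < d := by omega
  have hΩne : Nonempty Ω := Fintype.card_pos_iff.mp (by omega)
  -- number of fixed points of σ
  let r : H → ℕ := fun σ => Fintype.card (fixedBy Ω σ)
  have hr_le : ∀ σ : H, r σ ≤ d := by
    intro σ
    rw [hdcard]
    exact Fintype.card_le_of_injective _ Subtype.val_injective
  -- Burnside on Ω : one orbit
  have hq1 : Fintype.card (orbitRel.Quotient H Ω) = 1 := by
    haveI := (pretransitive_iff_subsingleton_quotient H Ω).mp inferInstance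
    obtain ⟨ω⟩ := hΩne
    exact Fintype.card_eq_one_iff.mpr ⟨⟦ω⟧, fun y => Subsingleton.elim y _⟩
  have key1 : ∑ σ : H, r σ = Fintype.card H := by
    have := MulAction.sum_card_fixedBy_eq_card_orbits_mul_card_group H Ω
    rw [hq1, one_mul] at this
    simpa [r] using this
  -- Burnside on Ω × Ω : at least two orbits
  have hfix2 : ∀ σ : H, Fintype.card (fixedBy (Ω × Ω) σ) = r σ ^ 2 := by
    intro σ
    rw [sq]
    have e : (fixedBy (Ω × Ω) σ) ≃ (fixedBy Ω σ) × (fixedBy Ω σ) :=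
      { toFun := fun p => (⟨p.1.1, congrArg Prod.fst p.2⟩, ⟨p.1.2, congrArg Prod.snd p.2⟩)
        invFun := fun q => ⟨(q.1.1, q.2.1), Prod.ext q.1.2 q.2.2⟩
        left_inv := fun p => rfl
        right_inv := fun q => rfl }
    exact (Fintype.card_congr e).trans (Fintype.card_prod _ _)
  have htwo : 2 ≤ Fintype.card (orbitRel.Quotient H (Ω × Ω)) := by
    obtain ⟨ω, ω', hne⟩ := Fintype.exists_pair_of_one_lt_card (α := Ω) (by omega)
    refine Fintype.one_lt_card_iff.mpr ⟨⟦(ω, ω)⟧, ⟦(ω, ω')⟧, fun h => hne ?_⟩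
    rw [Quotient.eq] at h
    obtain ⟨σ, hσ⟩ := h
    have h5 : σ • ω = ω := (Prod.ext_iff.mp hσ).1
    have h6 : σ • ω' = ω := (Prod.ext_iff.mp hσ).2
    have : σ • ω = σ • ω' := by rw [h5, h6]
    exact (smul_left_cancel σ this)
  have key2 : 2 * Fintype.card H ≤ ∑ σ : H, r σ ^ 2 := by
    have hb := MulAction.sum_card_fixedBy_eq_card_orbits_mul_card_group H (Ω × Ω)
    calc 2 * Fintype.card H
        ≤ Fintype.card (orbitRel.Quotient H (Ω × Ω)) * Fintype.card H :=
          Nat.mul_le_mul_right _ htwo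
      _ = ∑ σ : H, Fintype.card (fixedBy (Ω × Ω) σ) := hb.symm
      _ = ∑ σ : H, r σ ^ 2 := by simp_rw [hfix2]
  -- the set of elements with a fixed point
  let S : Finset H := Finset.univ.filter (fun σ => ∃ ω : Ω, σ • ω = ω)
  have hmem : ∀ σ : H, σ ∈ S ↔ 1 ≤ r σ := by
    intro σ
    simp only [S, Finset.mem_filter, Finset.mem_univ, true_and]
    rw [Nat.one_le_iff_ne_zero, ← Nat.pos_iff_ne_zero, Fintype.card_pos_iff]
    constructor
    · rintro ⟨ω, hω⟩; exact ⟨⟨ω, hω⟩⟩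
    · rintro ⟨⟨ω, hω⟩⟩; exact ⟨ω, hω⟩
  have hzero : ∀ σ ∉ S, r σ = 0 := by
    intro σ hσ
    by_contra h
    exact hσ ((hmem σ).mpr (Nat.one_le_iff_ne_zero.mpr h))
  -- pointwise inequality and summation
  have hpt : ∀ σ ∈ S, r σ ^ 2 + d ≤ (d + 1) * r σ := by
    intro σ hσ
    have h1 := (hmem σ).mp hσ
    have h2 := hr_le σ
    nlinarith
  have hsum : ∑ σ : H, r σ ^ 2 + d * S.card ≤ (d + 1) * Fintype.card H := by
    have e1 : ∑ σ : H, r σ ^ 2 = ∑ σ ∈ S, r σ ^ 2 := by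
      rw [← Finset.sum_subset (Finset.subset_univ S)]
      intro σ _ hσ
      rw [hzero σ hσ]; ring
    have e2 : ∑ σ : H, r σ = ∑ σ ∈ S, r σ := by
      rw [← Finset.sum_subset (Finset.subset_univ S)]
      intro σ _ hσ
      exact hzero σ hσ
    calc ∑ σ : H, r σ ^ 2 + d * S.card
        = ∑ σ ∈ S, (r σ ^ 2 + d) := by
          rw [Finset.sum_add_distrib, Finset.sum_const, smul_eq_mul, e1]; ring
      _ ≤ ∑ σ ∈ S, (d + 1) * r σ := Finset.sum_le_sum hpt
      _ = (d + 1) * ∑ σ : H, r σ := by rw [← Finset.mul_sum, e2]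
      _ = (d + 1) * Fintype.card H := by rw [key1]
  have hnat : d * S.card ≤ (d - 1) * Fintype.card H := by
    have := le_trans (Nat.add_le_add_right key2 (d * S.card)) hsum
    have hd1 : 1 ≤ d := hd0
    nlinarith [Nat.sub_add_cancel hd1, Nat.mul_le_mul_right (Fintype.card H) (Nat.sub_le d 1)]
  -- identify Nat.card with S.card
  have hScard : Nat.card {σ : H | ∃ ω : Ω, σ • ω = ω} = S.card := by
    rw [Nat.card_eq_fintype_card]
    simp [S, Set.mem_setOf_eq, ← Fintype.card_subtype]
  -- conclude over ℝ
  have hHcard : (Nat.card H : ℝ) = (Fintype.card H : ℝ) := by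
    rw [Nat.card_eq_fintype_card]
  have hcast : (d : ℝ) * S.card ≤ ((d : ℝ) - 1) * Fintype.card H := by
    have := (Nat.cast_le (α := ℝ)).mpr hnat
    push_cast [Nat.cast_sub hd0] at this
    linarith
  rw [hScard, hHcard]
  have hdR : (0 : ℝ) < d := by exact_mod_cast hd0
  rw [show (1 : ℝ) - 1 / d = ((d : ℝ) - 1) / d by field_simp, div_mul_eq_mul_div,
    le_div_iff₀ hdR]
  nlinarith
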